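/- arXiv:2205.08596 — 4 statements merged into one kernel-verified Lean document; each statement's English description precedes it below -/
import Mathlib

section
/- Let H be a Hopf algebra over a field k. The category PMod^H of partial H-comodules has a generator, i.e., there exists a partial H-comodule G such that for any two distinct parallel morphisms f, g : M → N in PMod^H there is a morphism h : G → M with f∘h ≠ g∘h. -/
/-
Every element `m` of a partial comodule `M` lies in a subspace `W` spanned by countably many
vectors with `ρ W ⊆ W ⊗ H`: close `{m}` under taking the `M`-legs of a finite tensor expression
of `ρ x`. As `W ⊗ H → M ⊗ H` is injective (we are over a field), `ρ` restricts to `W`, and the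
restriction satisfies the axioms because both sides of each axiom are natural with respect to
maps intertwining the coactions. Realised as quotients of `k^(ℕ)`, these countable partial
comodules form a set, and their direct sum is a generator since each of them is a retract of it.
-/

open TensorProduct CategoryTheory CategoryTheory.Limits
noncomputable section
universe u
variable (k : Type u) [Field k] (H : Type u) [Ring H] [HopfAlgebra k H]

def mulLast (X : Type u) [AddCommGroup X] [Module k X] :
    ((X ⊗[k] H) ⊗[k] H) →ₗ[k] X ⊗[k] H :=
  (LinearMap.lTensor X (LinearMap.mul' k H)) ∘ₗ (TensorProduct.assoc k X H H).toLinearMap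

def comulLast (X : Type u) [AddCommGroup X] [Module k X] :
    (X ⊗[k] H) →ₗ[k] (X ⊗[k] H) ⊗[k] H :=
  (TensorProduct.assoc k X H H).symm.toLinearMap ∘ₗ LinearMap.lTensor X Coalgebra.comul

def antLast (X : Type u) [AddCommGroup X] [Module k X] :
    (X ⊗[k] H) →ₗ[k] X ⊗[k] H :=
  LinearMap.lTensor X (HopfAlgebra.antipode (R := k) (A := H))

def counitLast (X : Type u) [AddCommGroup X] [Module k X] :
    (X ⊗[k] H) →ₗ[k] X :=
  (TensorProduct.rid k X).toLinearMap ∘ₗ LinearMap.lTensor X Coalgebra.counit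

structure IsPartialComodule {M : Type u} [AddCommGroup M] [Module k M]
    (ρ : M →ₗ[k] M ⊗[k] H) : Prop where
  counit : counitLast k H M ∘ₗ ρ = LinearMap.id
  pcm2 :
    mulLast k H (M ⊗[k] H) ∘ₗ antLast k H ((M ⊗[k] H) ⊗[k] H) ∘ₗ
        LinearMap.rTensor H (comulLast k H M) ∘ₗ LinearMap.rTensor H ρ ∘ₗ ρ =
    mulLast k H (M ⊗[k] H) ∘ₗ antLast k H ((M ⊗[k] H) ⊗[k] H) ∘ₗ
        LinearMap.rTensor H (LinearMap.rTensor H ρ) ∘ₗ LinearMap.rTensor H ρ ∘ₗ ρ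
  pcm3 :
    LinearMap.rTensor H (mulLast k H M) ∘ₗ LinearMap.rTensor H (antLast k H (M ⊗[k] H)) ∘ₗ
        comulLast k H (M ⊗[k] H) ∘ₗ LinearMap.rTensor H ρ ∘ₗ ρ =
    LinearMap.rTensor H (mulLast k H M) ∘ₗ LinearMap.rTensor H (antLast k H (M ⊗[k] H)) ∘ₗ
        LinearMap.rTensor H (LinearMap.rTensor H ρ) ∘ₗ LinearMap.rTensor H ρ ∘ₗ ρ

/-- Objects of the category `PMod^H` of right partial `H`-comodules. -/
structure PComod where
  carrier : Type u
  [isAddCommGroup : AddCommGroup carrier]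
  [isModule : Module k carrier]
  ρ : carrier →ₗ[k] carrier ⊗[k] H
  isPartialComodule : IsPartialComodule k H ρ

attribute [instance] PComod.isAddCommGroup PComod.isModule

variable {k H}

/-- Morphisms of partial comodules: linear maps commuting with the coactions. -/
instance : Category.{u} (PComod k H) where
  Hom A B := { f : A.carrier →ₗ[k] B.carrier // LinearMap.rTensor H f ∘ₗ A.ρ = B.ρ ∘ₗ f }
  id A := ⟨LinearMap.id, by simp [LinearMap.rTensor_id]⟩
  comp {A B C} f g := ⟨g.1 ∘ₗ f.1, by
    rw [LinearMap.rTensor_comp, LinearMap.comp_assoc, f.2, ← LinearMap.comp_assoc, g.2,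
      LinearMap.comp_assoc]⟩
  id_comp f := by apply Subtype.ext; simp
  comp_id f := by apply Subtype.ext; simp
  assoc f g h := by apply Subtype.ext; simp [LinearMap.comp_assoc]

variable (k H)

/-- The forgetful functor from partial `H`-comodules to vector spaces. -/
def pforget : PComod k H ⥤ ModuleCat.{u} k where
  obj A := ModuleCat.of k A.carrier
  map f := ModuleCat.ofHom f.1
  map_id _ := rfl
  map_comp _ _ := rfl

open LinearMap

section Naturality

variable {k H}
variable {X Y : Type u} [AddCommGroup X] [Module k X] [AddCommGroup Y] [Module k Y]

theorem comp_eq_comp_of_squares {A B C D E F : Type*} [AddCommGroup A] [Module k A]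
    [AddCommGroup B] [Module k B] [AddCommGroup C] [Module k C] [AddCommGroup D] [Module k D]
    [AddCommGroup E] [Module k E] [AddCommGroup F] [Module k F]
    {f₁ : A →ₗ[k] B} {a : B →ₗ[k] C} {b : A →ₗ[k] D} {f₂ : D →ₗ[k] C} {c : C →ₗ[k] E}
    {d : D →ₗ[k] F} {f₃ : F →ₗ[k] E}
    (h₁ : a ∘ₗ f₁ = f₂ ∘ₗ b) (h₂ : c ∘ₗ f₂ = f₃ ∘ₗ d) : (c ∘ₗ a) ∘ₗ f₁ = f₃ ∘ₗ d ∘ₗ b := by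
  rw [comp_assoc, h₁, ← comp_assoc, h₂, comp_assoc]

theorem rTensor_square {A B C D : Type*} [AddCommGroup A] [Module k A]
    [AddCommGroup B] [Module k B] [AddCommGroup C] [Module k C] [AddCommGroup D] [Module k D]
    {f : A →ₗ[k] B} {a : B →ₗ[k] C} {b : A →ₗ[k] D} {g : D →ₗ[k] C}
    (h : a ∘ₗ f = g ∘ₗ b) : rTensor H a ∘ₗ rTensor H f = rTensor H g ∘ₗ rTensor H b := by
  rw [← rTensor_comp, h, rTensor_comp]

theorem counitLast_comp_rTensor (f : X →ₗ[k] Y) :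
    counitLast k H Y ∘ₗ rTensor H f = f ∘ₗ counitLast k H X :=
  TensorProduct.ext' fun x h => by simp [counitLast]

theorem antLast_comp_rTensor (f : X →ₗ[k] Y) :
    antLast k H Y ∘ₗ rTensor H f = rTensor H f ∘ₗ antLast k H X :=
  TensorProduct.ext' fun x h => by simp [antLast]

theorem mulLast_comp_rTensor (f : X →ₗ[k] Y) :
    mulLast k H Y ∘ₗ rTensor H (rTensor H f) = rTensor H f ∘ₗ mulLast k H X :=
  TensorProduct.ext_threefold fun x h₁ h₂ => by simp [mulLast]

theorem comulLast_comp_rTensor (f : X →ₗ[k] Y) :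
    comulLast k H Y ∘ₗ rTensor H f = rTensor H (rTensor H f) ∘ₗ comulLast k H X := by
  refine TensorProduct.ext' fun x h => ?_
  simp only [LinearMap.comp_apply, rTensor_tmul, comulLast, LinearEquiv.coe_coe, lTensor_tmul]
  induction Coalgebra.comul (R := k) h using TensorProduct.induction_on with
  | zero => simp
  | tmul a b => simp
  | add a b ha hb => simp only [TensorProduct.tmul_add, map_add, ha, hb]

variable (ρ : X →ₗ[k] X ⊗[k] H)

def pcm2Left : X →ₗ[k] (X ⊗[k] H) ⊗[k] H :=
  mulLast k H (X ⊗[k] H) ∘ₗ antLast k H ((X ⊗[k] H) ⊗[k] H) ∘ₗ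
    rTensor H (comulLast k H X) ∘ₗ rTensor H ρ ∘ₗ ρ

def pcm2Right : X →ₗ[k] (X ⊗[k] H) ⊗[k] H :=
  mulLast k H (X ⊗[k] H) ∘ₗ antLast k H ((X ⊗[k] H) ⊗[k] H) ∘ₗ
    rTensor H (rTensor H ρ) ∘ₗ rTensor H ρ ∘ₗ ρ

def pcm3Left : X →ₗ[k] (X ⊗[k] H) ⊗[k] H :=
  rTensor H (mulLast k H X) ∘ₗ rTensor H (antLast k H (X ⊗[k] H)) ∘ₗ
    comulLast k H (X ⊗[k] H) ∘ₗ rTensor H ρ ∘ₗ ρ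

def pcm3Right : X →ₗ[k] (X ⊗[k] H) ⊗[k] H :=
  rTensor H (mulLast k H X) ∘ₗ rTensor H (antLast k H (X ⊗[k] H)) ∘ₗ
    rTensor H (rTensor H ρ) ∘ₗ rTensor H ρ ∘ₗ ρ

variable {ρ} {ρY : Y →ₗ[k] Y ⊗[k] H} {f : X →ₗ[k] Y}

theorem counitLast_comp_comp_of_comp_eq (hf : rTensor H f ∘ₗ ρ = ρY ∘ₗ f) :
    (counitLast k H Y ∘ₗ ρY) ∘ₗ f = f ∘ₗ counitLast k H X ∘ₗ ρ :=
  comp_eq_comp_of_squares hf.symm (counitLast_comp_rTensor f)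

theorem pcm2Left_comp_of_comp_eq (hf : rTensor H f ∘ₗ ρ = ρY ∘ₗ f) :
    pcm2Left ρY ∘ₗ f = rTensor H (rTensor H f) ∘ₗ pcm2Left ρ :=
  comp_eq_comp_of_squares (comp_eq_comp_of_squares (comp_eq_comp_of_squares
    (comp_eq_comp_of_squares hf.symm (rTensor_square hf.symm))
    (rTensor_square (comulLast_comp_rTensor f))) (antLast_comp_rTensor _)) (mulLast_comp_rTensor _)

theorem pcm2Right_comp_of_comp_eq (hf : rTensor H f ∘ₗ ρ = ρY ∘ₗ f) :
    pcm2Right ρY ∘ₗ f = rTensor H (rTensor H f) ∘ₗ pcm2Right ρ :=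
  comp_eq_comp_of_squares (comp_eq_comp_of_squares (comp_eq_comp_of_squares
    (comp_eq_comp_of_squares hf.symm (rTensor_square hf.symm))
    (rTensor_square (rTensor_square hf.symm))) (antLast_comp_rTensor _)) (mulLast_comp_rTensor _)

theorem pcm3Left_comp_of_comp_eq (hf : rTensor H f ∘ₗ ρ = ρY ∘ₗ f) :
    pcm3Left ρY ∘ₗ f = rTensor H (rTensor H f) ∘ₗ pcm3Left ρ :=
  comp_eq_comp_of_squares (comp_eq_comp_of_squares (comp_eq_comp_of_squares
    (comp_eq_comp_of_squares hf.symm (rTensor_square hf.symm))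
    (comulLast_comp_rTensor _)) (rTensor_square (antLast_comp_rTensor _)))
    (rTensor_square (mulLast_comp_rTensor f))

theorem pcm3Right_comp_of_comp_eq (hf : rTensor H f ∘ₗ ρ = ρY ∘ₗ f) :
    pcm3Right ρY ∘ₗ f = rTensor H (rTensor H f) ∘ₗ pcm3Right ρ :=
  comp_eq_comp_of_squares (comp_eq_comp_of_squares (comp_eq_comp_of_squares
    (comp_eq_comp_of_squares hf.symm (rTensor_square hf.symm))
    (rTensor_square (rTensor_square hf.symm))) (rTensor_square (antLast_comp_rTensor _)))
    (rTensor_square (mulLast_comp_rTensor f))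

end Naturality

namespace IsPartialComodule

variable {k H}
variable {X Y : Type u} [AddCommGroup X] [Module k X] [AddCommGroup Y] [Module k Y]

theorem of_injective {ρ : X →ₗ[k] X ⊗[k] H} {ρY : Y →ₗ[k] Y ⊗[k] H} {f : X →ₗ[k] Y}
    (hinj : Function.Injective f) (hf : rTensor H f ∘ₗ ρ = ρY ∘ₗ f)
    (hY : IsPartialComodule k H ρY) : IsPartialComodule k H ρ := by
  have hinj₂ : Function.Injective (rTensor H (rTensor H f)) :=
    Module.Flat.rTensor_preserves_injective_linearMap _
      (Module.Flat.rTensor_preserves_injective_linearMap _ hinj)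
  refine ⟨?_, ?_, ?_⟩
  · rw [← cancel_left hinj, ← counitLast_comp_comp_of_comp_eq hf, hY.counit]
    rfl
  · change pcm2Left ρ = pcm2Right ρ
    rw [← cancel_left hinj₂, ← pcm2Left_comp_of_comp_eq hf, ← pcm2Right_comp_of_comp_eq hf]
    exact congrArg (· ∘ₗ f) hY.pcm2
  · change pcm3Left ρ = pcm3Right ρ
    rw [← cancel_left hinj₂, ← pcm3Left_comp_of_comp_eq hf, ← pcm3Right_comp_of_comp_eq hf]
    exact congrArg (· ∘ₗ f) hY.pcm3

theorem directSum {ι : Type u} [DecidableEq ι] {M : ι → Type u} [∀ i, AddCommGroup (M i)]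
    [∀ i, Module k (M i)] {ρs : ∀ i, M i →ₗ[k] M i ⊗[k] H}
    (hρs : ∀ i, IsPartialComodule k H (ρs i)) {ρ : DirectSum ι M →ₗ[k] DirectSum ι M ⊗[k] H}
    (hρ : ∀ i, rTensor H (DirectSum.lof k ι M i) ∘ₗ ρs i = ρ ∘ₗ DirectSum.lof k ι M i) :
    IsPartialComodule k H ρ := by
  refine ⟨DirectSum.linearMap_ext k fun i => ?_, ?_, ?_⟩
  · rw [counitLast_comp_comp_of_comp_eq (hρ i), (hρs i).counit]
    rfl
  · change pcm2Left ρ = pcm2Right ρ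
    refine DirectSum.linearMap_ext k fun i => ?_
    rw [pcm2Left_comp_of_comp_eq (hρ i), pcm2Right_comp_of_comp_eq (hρ i)]
    exact congrArg _ (hρs i).pcm2
  · change pcm3Left ρ = pcm3Right ρ
    refine DirectSum.linearMap_ext k fun i => ?_
    rw [pcm3Left_comp_of_comp_eq (hρ i), pcm3Right_comp_of_comp_eq (hρ i)]
    exact congrArg _ (hρs i).pcm3

end IsPartialComodule

namespace PComod

variable {k H}

variable {ι : Type u} [DecidableEq ι] (A : ι → PComod k H)

def sumCoaction :
    DirectSum ι (fun i => (A i).carrier) →ₗ[k] DirectSum ι (fun i => (A i).carrier) ⊗[k] H :=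
  DirectSum.toModule k ι _ fun i => rTensor H (DirectSum.lof k ι _ i) ∘ₗ (A i).ρ

theorem rTensor_lof_comp_ρ (i : ι) :
    rTensor H (DirectSum.lof k ι _ i) ∘ₗ (A i).ρ = sumCoaction A ∘ₗ DirectSum.lof k ι _ i :=
  LinearMap.ext fun x => by simp [sumCoaction]

def sum : PComod k H where
  carrier := DirectSum ι fun i => (A i).carrier
  ρ := sumCoaction A
  isPartialComodule :=
    IsPartialComodule.directSum (fun i => (A i).isPartialComodule) (rTensor_lof_comp_ρ A)

theorem rTensor_component_comp_sumCoaction (i : ι) :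
    rTensor H (DirectSum.component k ι _ i) ∘ₗ sumCoaction A =
      (A i).ρ ∘ₗ DirectSum.component k ι _ i := by
  refine DirectSum.linearMap_ext k fun j => ?_
  rw [comp_assoc, ← rTensor_lof_comp_ρ, ← comp_assoc, ← rTensor_comp, comp_assoc,
    DirectSum.component_comp_lof]
  split_ifs with h
  · subst h
    simp
  · simp

def sumProj (i : ι) : sum A ⟶ A i :=
  ⟨DirectSum.component k ι _ i, rTensor_component_comp_sumCoaction A i⟩

theorem sumProj_lof (i : ι) (x : (A i).carrier) :
    (sumProj A i).1 (DirectSum.lof k ι _ i x) = x :=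
  DirectSum.component.lof_self (M := fun i => (A i).carrier) k i x

end PComod

theorem exists_countable_mem_forall_subset {α : Type*} (F : α → Set α)
    (hF : ∀ a, (F a).Countable) (a : α) :
    ∃ s : Set α, s.Countable ∧ a ∈ s ∧ ∀ x ∈ s, F x ⊆ s := by
  let step : Set α → Set α := fun t => ⋃ x ∈ t, F x
  refine ⟨⋃ n, step^[n] {a}, Set.countable_iUnion fun n => ?_, Set.mem_iUnion.2 ⟨0, rfl⟩, ?_⟩
  · induction n with
    | zero => exact Set.countable_singleton a
    | succ n ih =>
      rw [Function.iterate_succ_apply']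
      exact ih.biUnion fun x _ => hF x
  · intro x hx y hy
    obtain ⟨n, hn⟩ := Set.mem_iUnion.1 hx
    refine Set.mem_iUnion.2 ⟨n + 1, ?_⟩
    rw [Function.iterate_succ_apply']
    exact Set.mem_biUnion hn hy

section Countable

variable {k H}
variable {X M : Type u} [AddCommGroup X] [Module k X] [AddCommGroup M] [Module k M]

theorem exists_finsupp_nat_range_comp_le_range_rTensor (ρ : M →ₗ[k] M ⊗[k] H) (m : M) :
    ∃ ψ : (ℕ →₀ k) →ₗ[k] M, m ∈ range ψ ∧ range (ρ ∘ₗ ψ) ≤ range (rTensor H ψ) := by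
  choose S hS using fun x : M => TensorProduct.exists_finset (ρ x)
  obtain ⟨s, hs, hms, hclosed⟩ := exists_countable_mem_forall_subset
    (fun x => Prod.fst '' (S x : Set (M × H))) (fun x => ((S x).finite_toSet.image _).countable) m
  obtain ⟨σ, rfl⟩ := hs.exists_eq_range ⟨m, hms⟩
  refine ⟨Finsupp.linearCombination k σ, ?_, ?_⟩
  · rw [Finsupp.range_linearCombination]
    exact Submodule.subset_span hms
  · rw [range_comp, Finsupp.range_linearCombination, Submodule.map_le_iff_le_comap,
      Submodule.span_le]
    rintro _ ⟨n, rfl⟩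
    rw [SetLike.mem_coe, Submodule.mem_comap, hS]
    refine Submodule.sum_mem _ fun p hp => ?_
    obtain ⟨n', hn'⟩ := hclosed _ ⟨n, rfl⟩ ⟨p, hp, rfl⟩
    exact ⟨Finsupp.single n' 1 ⊗ₜ p.2, by simp [hn']⟩

theorem exists_comp_eq_of_range_le {Y Z : Type*} [AddCommGroup Y] [Module k Y] [AddCommGroup Z]
    [Module k Z] {j : X →ₗ[k] Z} (hj : Function.Injective j) {g : Y →ₗ[k] Z}
    (h : range g ≤ range j) : ∃ g' : Y →ₗ[k] X, j ∘ₗ g' = g :=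
  ⟨(LinearEquiv.ofInjective j hj).symm.toLinearMap ∘ₗ g.codRestrict _ fun y => h ⟨y, rfl⟩,
    LinearMap.ext fun y => by simp⟩

theorem IsPartialComodule.exists_of_injective {ρ : M →ₗ[k] M ⊗[k] H}
    (hρ : IsPartialComodule k H ρ) {j : X →ₗ[k] M} (hj : Function.Injective j)
    (h : range (ρ ∘ₗ j) ≤ range (rTensor H j)) :
    ∃ ρX : X →ₗ[k] X ⊗[k] H, IsPartialComodule k H ρX ∧ rTensor H j ∘ₗ ρX = ρ ∘ₗ j := by
  obtain ⟨ρX, hρX⟩ :=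
    exists_comp_eq_of_range_le (Module.Flat.rTensor_preserves_injective_linearMap _ hj) h
  exact ⟨ρX, .of_injective hj hρX hρ, hρX⟩

end Countable

def CountablePComod : Type u :=
  Σ U : Submodule k (ℕ →₀ k),
    { ρ : ((ℕ →₀ k) ⧸ U) →ₗ[k] ((ℕ →₀ k) ⧸ U) ⊗[k] H // IsPartialComodule k H ρ }

variable {k H}

def CountablePComod.toPComod (i : CountablePComod k H) : PComod k H :=
  ⟨(ℕ →₀ k) ⧸ i.1, i.2.1, i.2.2⟩

theorem PComod.exists_hom_from_countablePComod (M : PComod k H) (m : M.carrier) :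
    ∃ (i : CountablePComod k H) (φ : i.toPComod ⟶ M) (x : i.toPComod.carrier), φ.1 x = m := by
  obtain ⟨ψ, ⟨v, rfl⟩, hψ⟩ := exists_finsupp_nat_range_comp_le_range_rTensor M.ρ m
  let j := (ker ψ).liftQ ψ le_rfl
  have hj : Function.Injective j := ker_eq_bot.1 (Submodule.ker_liftQ_eq_bot _ _ _ le_rfl)
  have hψ_eq : ψ = j ∘ₗ (ker ψ).mkQ := (Submodule.liftQ_mkQ _ _ _).symm
  have hrange : range (M.ρ ∘ₗ j) ≤ range (rTensor H j) := by
    have hmkQ : range (rTensor H (ker ψ).mkQ) = ⊤ :=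
      range_eq_top.2 (rTensor_surjective H (Submodule.mkQ_surjective _))
    rwa [hψ_eq, rTensor_comp, ← comp_assoc, range_comp_of_range_eq_top _ (Submodule.range_mkQ _),
      range_comp_of_range_eq_top _ hmkQ] at hψ
  obtain ⟨ρQ, hρQ, hjρQ⟩ := M.isPartialComodule.exists_of_injective hj hrange
  exact ⟨⟨ker ψ, ρQ, hρQ⟩, ⟨j, hjρQ⟩, (ker ψ).mkQ v, rfl⟩

variable (k H)

/-- The category of partial `H`-comodules has a generator. -/
theorem pcomod_has_generator :
    ∃ G : PComod k H, ∀ (M N : PComod k H) (f g : M ⟶ N), f ≠ g →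
      ∃ h : G ⟶ M, h ≫ f ≠ h ≫ g := by
  classical
  refine ⟨PComod.sum CountablePComod.toPComod, fun M N f g hfg => ?_⟩
  obtain ⟨m, hm⟩ : ∃ m, f.1 m ≠ g.1 m := by
    contrapose! hfg
    exact Subtype.ext (LinearMap.ext hfg)
  obtain ⟨i, φ, x, rfl⟩ := M.exists_hom_from_countablePComod m
  refine ⟨PComod.sumProj _ i ≫ φ, fun h => hm ?_⟩
  have hx := congrArg (fun t => t.1 (DirectSum.lof k _ _ i x)) h
  change f.1 (φ.1 ((PComod.sumProj _ i).1 _)) = g.1 (φ.1 ((PComod.sumProj _ i).1 _)) at hx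
  rwa [PComod.sumProj_lof] at hx

end
end

section
/- Let k be a field and G a finite group. Then the dual Hopf algebra (kG)* of the group algebra kG is regular: every partial (kG)*-comodule is the sum of its finite-dimensional partial subcomodules. -/
open TensorProduct CategoryTheory CategoryTheory.Limits

noncomputable section

universe u

section PartialComodules

variable (k : Type u) [Field k] (H : Type u) [Ring H] [HopfAlgebra k H]

/-- A subspace `N` is a partial subcomodule when it is invariant under the coaction. -/
def IsSubcomodule {M : Type u} [AddCommGroup M] [Module k M]
    (ρ : M →ₗ[k] M ⊗[k] H) (N : Submodule k M) : Prop :=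
  ∀ n ∈ N, ρ n ∈ LinearMap.range (LinearMap.rTensor H N.subtype)

end PartialComodules

section Regular

variable (k : Type u) [Field k] (H : Type u) [Ring H] [HopfAlgebra k H]

/-- A partial comodule is regular when it is the sum of its finite-dimensional partial
subcomodules. -/
def IsRegularComodule {M : Type u} [AddCommGroup M] [Module k M]
    (ρ : M →ₗ[k] M ⊗[k] H) : Prop :=
  sSup { N : Submodule k M | IsSubcomodule k H ρ N ∧ FiniteDimensional k ↥N } = ⊤

/-- A Hopf algebra is regular when every partial comodule over it is regular. -/
def IsRegularHopf : Prop :=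
  ∀ (M : Type u) (_ : AddCommGroup M) (_ : Module k M) (ρ : M →ₗ[k] M ⊗[k] H),
    IsPartialComodule k H ρ → IsRegularComodule k H ρ

end Regular
section DualPairing

variable (k : Type u) [Field k] (H : Type u) [Ring H] [HopfAlgebra k H]
variable (H' : Type u) [Ring H'] [HopfAlgebra k H']

/-- `φ` exhibits the Hopf algebra `H'` as the dual Hopf algebra of `H`: the multiplication,
unit, comultiplication, counit and antipode of `H'` are dual to the comultiplication, counit,
multiplication, unit and antipode of `H`. -/
structure IsDualHopf (φ : H' ≃ₗ[k] Module.Dual k H) : Prop where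
  mul_dual : ∀ (a b : H') (h : H),
    φ (a * b) h =
      TensorProduct.lid k k (TensorProduct.map (φ a) (φ b) (Coalgebra.comul (R := k) h))
  one_dual : φ 1 = Coalgebra.counit (R := k)
  comul_dual : ∀ (a : H') (x y : H),
    TensorProduct.dualDistrib k H H
      (TensorProduct.map φ.toLinearMap φ.toLinearMap (Coalgebra.comul (R := k) a))
      (x ⊗ₜ[k] y) = φ a (x * y)
  counit_dual : ∀ a : H', Coalgebra.counit (R := k) a = φ a 1
  antipode_dual : ∀ (a : H') (h : H),
    φ (HopfAlgebra.antipode (R := k) a) h = φ a (HopfAlgebra.antipode (R := k) h)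

end DualPairing

section GroupAlgebra

variable (k : Type u) [Field k] (K : Type u) [Ring K] [HopfAlgebra k K]
variable (G : Type u) [Group G]

/-- `e : G → K` exhibits the Hopf algebra `K` as the group Hopf algebra `kG` of the group
`G`: the elements `e g` form a basis of `K`, multiply as in `G`, are grouplike, and the
antipode is induced by inversion in `G`. -/
structure IsGroupHopfAlgebra (e : G → K) : Prop where
  basis : ∃ b : Module.Basis G k K, ∀ g : G, b g = e g
  map_mul : ∀ g h : G, e g * e h = e (g * h)
  map_one : e 1 = 1
  comul_grouplike : ∀ g : G, Coalgebra.comul (R := k) (e g) = e g ⊗ₜ[k] e g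
  counit_grouplike : ∀ g : G, Coalgebra.counit (R := k) (e g) = 1
  antipode_inv : ∀ g : G, HopfAlgebra.antipode (R := k) (e g) = e g⁻¹

end GroupAlgebra


/-!
In the basis `(δ_g)` of `(kG)* = k^G` the coaction reads `ρ m = ∑_g π(g) m ⊗ δ_g`, and comparing
coefficients of `δ_a ⊗ δ_b` in (PCM1)–(PCM3) shows that `π` is a partial representation of `G`
in Exel's sense. The idempotents `π(g) π(g⁻¹)` commute and are permuted by left multiplication
with `π(s)`, so every product of `π`'s takes the form `(∏_{g ∈ S} π(g) π(g⁻¹)) π(h)`; hence the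
monoid generated by `π(G)` is finite, and the orbit of `m` under it spans a finite-dimensional
partial subcomodule containing `m`.
-/

structure IsPartialRep {G A : Type*} [Group G] [Monoid A] (T : G → A) : Prop where
  map_one : T 1 = 1
  mul_right : ∀ s t : G, T s * T t * T t⁻¹ = T (s * t) * T t⁻¹
  mul_left : ∀ s t : G, T s⁻¹ * T s * T t = T s⁻¹ * T (s * t)

namespace IsPartialRep

variable {G A : Type*} [Group G] [Monoid A] {T : G → A}

def proj (T : G → A) (g : G) : A := T g * T g⁻¹

variable (hT : IsPartialRep T)
include hT

lemma mul_inv_mul_self (s : G) : T s * T s⁻¹ * T s = T s := by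
  simpa [hT.map_one] using hT.mul_left s⁻¹ s

lemma mul_eq_left (s t : G) : T s * T t = T s * T s⁻¹ * T (s * t) := by
  simpa using (hT.mul_left s⁻¹ (s * t)).symm

lemma mul_eq_right (s t : G) : T s * T t = T (s * t) * T t⁻¹ * T t := by
  simpa using (hT.mul_right (s * t) t⁻¹).symm

lemma proj_mul_self (g : G) : proj T g * proj T g = proj T g := by
  simp only [proj, ← mul_assoc, hT.mul_inv_mul_self]

lemma mul_proj (s t : G) : T s * proj T t = proj T (s * t) * T s := by
  have hl : T s * proj T t = T (s * t) * T t⁻¹ :=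
    calc T s * proj T t = T (s * t) * (T t⁻¹ * T t * T t⁻¹) := by
          rw [proj, ← mul_assoc, hT.mul_eq_right]; simp only [mul_assoc]
      _ = T (s * t) * T t⁻¹ := by
          simpa using congrArg (T (s * t) * ·) (hT.mul_inv_mul_self t⁻¹)
  have hr : proj T (s * t) * T s = T (s * t) * T t⁻¹ :=
    calc proj T (s * t) * T s = T (s * t) * T (s * t)⁻¹ * T (s * t) * T t⁻¹ := by
          rw [proj, mul_assoc, hT.mul_eq_left]
          simp only [mul_assoc, mul_inv_rev, inv_inv, inv_mul_cancel, mul_one]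
      _ = T (s * t) * T t⁻¹ := by rw [hT.mul_inv_mul_self]
  rw [hl, hr]

lemma proj_commute (s t : G) : Commute (proj T s) (proj T t) := by
  have h := hT.mul_proj s (s⁻¹ * t)
  rw [mul_inv_cancel_left] at h
  calc proj T s * proj T t = T s * (proj T (s⁻¹ * t) * T s⁻¹) := by
        rw [proj, mul_assoc, hT.mul_proj]
    _ = proj T t * proj T s := by rw [← mul_assoc, h, mul_assoc]; rfl

def projProd (S : Finset G) : A :=
  S.noncommProd (proj T) fun s _ t _ _ => hT.proj_commute s t

lemma projProd_empty : hT.projProd ∅ = 1 := Finset.noncommProd_empty _ _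

lemma proj_commute_projProd (s : G) (S : Finset G) : Commute (proj T s) (hT.projProd S) :=
  Finset.noncommProd_commute _ _ _ _ fun t _ => hT.proj_commute s t

variable [DecidableEq G]

lemma projProd_insert_of_notMem {S : Finset G} {s : G} (hs : s ∉ S) :
    hT.projProd (insert s S) = proj T s * hT.projProd S :=
  Finset.noncommProd_insert_of_notMem _ _ _ _ hs

lemma proj_mul_projProd_of_mem {S : Finset G} {s : G} (hs : s ∈ S) :
    proj T s * hT.projProd S = hT.projProd S := by
  induction S using Finset.induction_on with
  | empty => simp at hs
  | insert t S ht ih =>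
    rw [hT.projProd_insert_of_notMem ht]
    obtain rfl | hs := Finset.mem_insert.mp hs
    · rw [← mul_assoc, hT.proj_mul_self]
    · rw [← mul_assoc, (hT.proj_commute s t).eq, mul_assoc, ih hs]

lemma projProd_insert (s : G) (S : Finset G) :
    hT.projProd (insert s S) = proj T s * hT.projProd S := by
  by_cases hs : s ∈ S
  · rw [Finset.insert_eq_of_mem hs, hT.proj_mul_projProd_of_mem hs]
  · exact hT.projProd_insert_of_notMem hs

lemma mul_projProd (s : G) (S : Finset G) :
    T s * hT.projProd S = hT.projProd (S.image (s * ·)) * T s := by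
  induction S using Finset.induction_on with
  | empty => rw [Finset.image_empty, projProd_empty, mul_one, one_mul]
  | insert t S _ ih =>
    rw [hT.projProd_insert, ← mul_assoc, hT.mul_proj, mul_assoc, ih, Finset.image_insert,
      hT.projProd_insert, mul_assoc]

lemma mul_projProd_mul (s g : G) (S : Finset G) :
    T s * (hT.projProd S * T g) = hT.projProd (insert s (S.image (s * ·))) * T (s * g) := by
  rw [← mul_assoc, hT.mul_projProd, mul_assoc, hT.mul_eq_left, hT.projProd_insert,
    (hT.proj_commute_projProd s _).eq]
  simp only [proj, mul_assoc]

omit [DecidableEq G] in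
theorem finite_closure [Finite G] : (Submonoid.closure (Set.range T) : Set A).Finite := by
  classical
  refine (Set.finite_range fun p : Finset G × G => hT.projProd p.1 * T p.2).subset ?_
  intro a ha
  induction ha using Submonoid.closure_induction_left with
  | one => exact ⟨(∅, 1), by simp [projProd_empty, hT.map_one]⟩
  | mul_left _ hx _ _ ih =>
    obtain ⟨s, rfl⟩ := hx
    obtain ⟨⟨S, g⟩, rfl⟩ := ih
    exact ⟨(_, _), (hT.mul_projProd_mul s g S).symm⟩

end IsPartialRep

namespace Module.Basis

variable {k : Type u} [Field k] {H : Type u} [Ring H] [HopfAlgebra k H] {ι : Type*}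

def tensorCoeff (q : Basis ι k H) (X : Type u) [AddCommGroup X] [Module k X] (i : ι) :
    X ⊗[k] H →ₗ[k] X :=
  (TensorProduct.rid k X).toLinearMap ∘ₗ LinearMap.lTensor X (q.coord i)

variable (q : Basis ι k H) {X Y : Type u} [AddCommGroup X] [Module k X]
  [AddCommGroup Y] [Module k Y]

@[simp]
lemma tensorCoeff_tmul (i : ι) (x : X) (h : H) :
    q.tensorCoeff X i (x ⊗ₜ h) = q.coord i h • x := by
  simp [tensorCoeff]

lemma tensorCoeff_rTensor (f : X →ₗ[k] Y) (i : ι) (w : X ⊗[k] H) :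
    q.tensorCoeff Y i (LinearMap.rTensor H f w) = f (q.tensorCoeff X i w) := by
  induction w using TensorProduct.induction_on with
  | zero => simp
  | tmul x h => simp
  | add v w hv hw => simp only [map_add, hv, hw]

lemma sum_tensorCoeff_tmul [Fintype ι] (w : X ⊗[k] H) :
    ∑ i, q.tensorCoeff X i w ⊗ₜ[k] q i = w := by
  induction w using TensorProduct.induction_on with
  | zero => simp
  | tmul x h =>
    simp_rw [tensorCoeff_tmul, TensorProduct.smul_tmul, ← TensorProduct.tmul_sum, coord_apply,
      sum_repr]
  | add v w hv hw => simp only [map_add, TensorProduct.add_tmul, Finset.sum_add_distrib, hv, hw]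

def coactionCoeff {M : Type u} [AddCommGroup M] [Module k M] (ρ : M →ₗ[k] M ⊗[k] H) (i : ι) :
    Module.End k M :=
  q.tensorCoeff M i ∘ₗ ρ

end Module.Basis

/-- `q` is the basis `(δ_g)` of `k^G`: its coordinate functionals are the evaluations at the
elements of `G`. -/
structure IsDualGroupBasis {k : Type u} [Field k] {H : Type u} [Ring H] [HopfAlgebra k H]
    {G : Type*} [Group G] (q : Module.Basis G k H) : Prop where
  coord_mul : ∀ (g : G) (x y : H), q.coord g (x * y) = q.coord g x * q.coord g y
  counit_eq : Coalgebra.counit = q.coord 1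
  coord_antipode : ∀ (g : G) (x : H), q.coord g (HopfAlgebra.antipode k x) = q.coord g⁻¹ x
  coord_comul : ∀ (a b : G) (x : H),
    TensorProduct.lid k k (TensorProduct.map (q.coord a) (q.coord b) (Coalgebra.comul x)) =
      q.coord (a * b) x

namespace IsDualGroupBasis

variable {k : Type u} [Field k] {H : Type u} [Ring H] [HopfAlgebra k H] {G : Type*} [Group G]
  {q : Module.Basis G k H} (hq : IsDualGroupBasis q) {X : Type u} [AddCommGroup X] [Module k X]
include hq

lemma tensorCoeff_mulLast (g : G) (y : (X ⊗[k] H) ⊗[k] H) :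
    q.tensorCoeff X g (mulLast k H X y) = q.tensorCoeff X g (q.tensorCoeff (X ⊗[k] H) g y) := by
  have : q.tensorCoeff X g ∘ₗ mulLast k H X = q.tensorCoeff X g ∘ₗ q.tensorCoeff (X ⊗[k] H) g :=
    TensorProduct.ext_threefold fun x h h' => by
      simp [mulLast, hq.coord_mul, mul_smul, smul_comm (q.repr h g)]
  exact LinearMap.congr_fun this y

lemma tensorCoeff_antLast (g : G) (w : X ⊗[k] H) :
    q.tensorCoeff X g (antLast k H X w) = q.tensorCoeff X g⁻¹ w := by
  induction w using TensorProduct.induction_on with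
  | zero => simp
  | tmul x h => simp [antLast, hq.coord_antipode]
  | add v w hv hw => simp only [map_add, hv, hw]

lemma tensorCoeff_tensorCoeff_comulLast (a b : G) (w : X ⊗[k] H) :
    q.tensorCoeff X a (q.tensorCoeff (X ⊗[k] H) b (comulLast k H X w)) =
      q.tensorCoeff X (a * b) w := by
  induction w using TensorProduct.induction_on with
  | zero => simp
  | tmul x h =>
    rw [Module.Basis.tensorCoeff_tmul, ← hq.coord_comul]
    simp only [comulLast, LinearMap.comp_apply, LinearMap.lTensor_tmul, LinearEquiv.coe_coe]
    induction Coalgebra.comul (R := k) h using TensorProduct.induction_on with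
    | zero => simp
    | tmul h₁ h₂ => simp [mul_smul, smul_comm (q.repr h₁ a)]
    | add v w hv hw => simp only [map_add, TensorProduct.tmul_add, add_smul, hv, hw]
  | add v w hv hw => simp only [map_add, hv, hw]

lemma counitLast_eq : counitLast k H X = q.tensorCoeff X 1 := by
  rw [counitLast, Module.Basis.tensorCoeff, hq.counit_eq]

end IsDualGroupBasis

section Regularity

variable {k : Type u} [Field k] {H : Type u} [Ring H] [HopfAlgebra k H] {ι : Type*}
  {M : Type u} [AddCommGroup M] [Module k M]

theorem IsPartialComodule.isPartialRep {G : Type*} [Group G] {q : Module.Basis G k H}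
    (hq : IsDualGroupBasis q) {ρ : M →ₗ[k] M ⊗[k] H} (hρ : IsPartialComodule k H ρ) :
    IsPartialRep (q.coactionCoeff ρ) where
  map_one := by
    rw [Module.Basis.coactionCoeff, ← hq.counitLast_eq, hρ.counit, Module.End.one_eq_id]
  mul_right s t := LinearMap.ext fun m => by
    have h := congrArg (q.tensorCoeff M s ∘ q.tensorCoeff (M ⊗[k] H) t)
      (LinearMap.congr_fun hρ.pcm2 m)
    simp only [Function.comp_apply, LinearMap.comp_apply, hq.tensorCoeff_mulLast,
      hq.tensorCoeff_antLast, q.tensorCoeff_rTensor, hq.tensorCoeff_tensorCoeff_comulLast] at h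
    exact h.symm
  mul_left s t := LinearMap.ext fun m => by
    have h := congrArg (q.tensorCoeff M s⁻¹ ∘ q.tensorCoeff (M ⊗[k] H) t)
      (LinearMap.congr_fun hρ.pcm3 m)
    simp only [Function.comp_apply, LinearMap.comp_apply, q.tensorCoeff_rTensor,
      hq.tensorCoeff_mulLast, hq.tensorCoeff_antLast, hq.tensorCoeff_tensorCoeff_comulLast,
      inv_inv] at h
    exact h.symm

lemma isSubcomodule_of_forall_coactionCoeff_mem [Fintype ι] (q : Module.Basis ι k H)
    {ρ : M →ₗ[k] M ⊗[k] H} {N : Submodule k M} (hN : ∀ i, ∀ n ∈ N, q.coactionCoeff ρ i n ∈ N) :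
    IsSubcomodule k H ρ N := fun n hn =>
  ⟨∑ i, ⟨q.coactionCoeff ρ i n, hN i n hn⟩ ⊗ₜ q i, by
    simp [Module.Basis.coactionCoeff, q.sum_tensorCoeff_tmul]⟩

theorem isRegularComodule_of_finite_closure [Fintype ι] (q : Module.Basis ι k H)
    {ρ : M →ₗ[k] M ⊗[k] H}
    (hfin : (Submonoid.closure (Set.range (q.coactionCoeff ρ)) : Set (Module.End k M)).Finite) :
    IsRegularComodule k H ρ := by
  set C := Submonoid.closure (Set.range (q.coactionCoeff ρ))
  rw [IsRegularComodule, eq_top_iff]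
  intro m _
  let N := Submodule.span k ((fun f : Module.End k M => f m) '' C)
  have hmN : m ∈ N := Submodule.subset_span ⟨1, C.one_mem, rfl⟩
  have hNfin : FiniteDimensional k N := FiniteDimensional.span_of_finite k (hfin.image _)
  have hN : IsSubcomodule k H ρ N := by
    refine isSubcomodule_of_forall_coactionCoeff_mem q fun i n hn => ?_
    have hNi : N ≤ N.comap (q.coactionCoeff ρ i) := Submodule.span_le.mpr <| by
      rintro _ ⟨f, hf, rfl⟩
      exact Submodule.subset_span
        ⟨q.coactionCoeff ρ i * f, C.mul_mem (Submonoid.subset_closure ⟨i, rfl⟩) hf, rfl⟩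
    exact hNi hn
  refine Submodule.mem_sSup_of_mem ?_ hmN
  exact ⟨hN, hNfin⟩

end Regularity

theorem IsDualHopf.exists_isDualGroupBasis {k : Type u} [Field k] {G : Type u} [Group G]
    [Finite G] {K : Type u} [Ring K] [HopfAlgebra k K] {e : G → K} {H' : Type u} [Ring H']
    [HopfAlgebra k H'] {φ : H' ≃ₗ[k] Module.Dual k K} (hK : IsGroupHopfAlgebra k K G e)
    (hφ : IsDualHopf k K H' φ) : ∃ q : Module.Basis G k H', IsDualGroupBasis q := by
  classical
  obtain ⟨b, hb⟩ := hK.basis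
  let q := b.dualBasis.map φ.symm
  have hcoord (g : G) (x : H') : q.coord g x = φ x (e g) := by
    simp [q, Module.Basis.coord_apply, hb]
  refine ⟨q, fun g x y => ?_, ?_, fun g x => ?_, fun a c x => ?_⟩
  · simp [hcoord, hφ.mul_dual, hK.comul_grouplike]
  · ext x
    rw [hcoord, hK.map_one, hφ.counit_dual]
  · rw [hcoord, hcoord, hφ.antipode_dual, hK.antipode_inv]
  · rw [hcoord, ← hK.map_mul, ← hφ.comul_dual]
    induction Coalgebra.comul (R := k) x using TensorProduct.induction_on with
    | zero => simp
    | tmul x y => simp [hcoord]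
    | add v w hv hw => simp only [map_add, LinearMap.add_apply, hv, hw]

/-- For a finite group `G`, the dual Hopf algebra `(kG)*` of the group
algebra `kG` is regular: every partial `(kG)*`-comodule is the sum of its finite-dimensional
partial subcomodules. -/
theorem dual_groupAlgebra_regular
    (k : Type u) [Field k] (G : Type u) [Group G] [Finite G]
    (K : Type u) [Ring K] [HopfAlgebra k K]
    (e : G → K) (hK : IsGroupHopfAlgebra k K G e)
    (H' : Type u) [Ring H'] [HopfAlgebra k H']
    (φ : H' ≃ₗ[k] Module.Dual k K) (hφ : IsDualHopf k K H' φ) :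
    IsRegularHopf k H' := by
  intro M _ _ ρ hρ
  have := Fintype.ofFinite G
  obtain ⟨q, hq⟩ := hφ.exists_isDualGroupBasis hK
  exact isRegularComodule_of_finite_closure q (hρ.isPartialRep hq).finite_closure
end
end

section
/- Let k be a field and H a regular Hopf algebra over k. Then every Hopf subalgebra H' of H is also regular. -/
open TensorProduct CategoryTheory CategoryTheory.Limits

noncomputable section

universe u

/-!
A partial `H'`-coaction `ρ'` pushed forward along `ι` is a partial `H`-coaction: `ι` respects
multiplication, comultiplication, counit and (being a bialgebra map between Hopf algebras)
the antipode, so every (PCM) identity for `(M ⊗ ι) ∘ ρ'` is the image of the corresponding one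
for `ρ'`. Regularity of `H` writes `M` as a sum of finite-dimensional `H`-subcomodules, and
each of them is an `H'`-subcomodule because `M/N ⊗ ι` stays injective over a field.
-/

theorem LinearMap.rTensor_comp_map_of_comp_eq {R A B C D P Q : Type*} [CommSemiring R]
    [AddCommMonoid A] [Module R A] [AddCommMonoid B] [Module R B] [AddCommMonoid C] [Module R C]
    [AddCommMonoid D] [Module R D] [AddCommMonoid P] [Module R P] [AddCommMonoid Q] [Module R Q]
    {f : A →ₗ[R] B} {g : B →ₗ[R] C} {f' : D →ₗ[R] C} {g' : A →ₗ[R] D} (ψ : P →ₗ[R] Q)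
    (h : g ∘ₗ f = f' ∘ₗ g') :
    rTensor Q g ∘ₗ map f ψ = map f' ψ ∘ₗ rTensor P g' := by
  rw [rTensor_comp_map, h, map_comp_rTensor]

theorem lTensor_mem_range_rTensor_subtype_iff {k M P Q : Type*} [Field k] [AddCommGroup M]
    [Module k M] [AddCommGroup P] [Module k P] [AddCommGroup Q] [Module k Q]
    (N : Submodule k M) {ψ : P →ₗ[k] Q} (hψ : Function.Injective ψ) (y : M ⊗[k] P) :
    LinearMap.lTensor M ψ y ∈ LinearMap.range (LinearMap.rTensor Q N.subtype) ↔
      y ∈ LinearMap.range (LinearMap.rTensor P N.subtype) := by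
  rw [← rTensor_mkQ, ← rTensor_mkQ, LinearMap.mem_ker, LinearMap.mem_ker, ← LinearMap.comp_apply,
    LinearMap.rTensor_comp_lTensor, ← LinearMap.lTensor_comp_rTensor, LinearMap.comp_apply,
    map_eq_zero_iff _ (Module.Flat.lTensor_preserves_injective_linearMap ψ hψ)]

open WithConv in
/- In the convolution monoid `WithConv (A →ₗ[R] B)`, `φ ∘ S` is a left inverse and `S ∘ φ` a
right inverse of `φ`. -/
theorem BialgHom.map_antipode {R A B : Type*} [CommSemiring R] [Semiring A] [Semiring B]
    [HopfAlgebra R A] [HopfAlgebra R B] (φ : A →ₐc[R] B) (a : A) :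
    φ (HopfAlgebra.antipode R a) = HopfAlgebra.antipode R (φ a) := by
  have left_inv :
      toConv (φ.toLinearMap ∘ₗ HopfAlgebra.antipode R) * toConv φ.toLinearMap = 1 := by
    have := LinearMap.algHom_comp_convMul_distrib (AlgHomClass.toAlgHom φ)
      (toConv (HopfAlgebra.antipode R)) (toConv LinearMap.id)
    rw [LinearMap.antipode_mul_id, LinearMap.algHom_comp_convOne] at this
    exact ofConv_injective this.symm
  have right_inv :
      toConv φ.toLinearMap * toConv (HopfAlgebra.antipode R ∘ₗ φ.toLinearMap) = 1 := by
    have := LinearMap.convMul_comp_coalgHom_distrib (toConv LinearMap.id)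
      (toConv (HopfAlgebra.antipode R)) φ.toCoalgHom
    rw [LinearMap.id_mul_antipode, LinearMap.convOne_comp_coalgHom] at this
    exact ofConv_injective this.symm
  exact LinearMap.congr_fun (congrArg ofConv (left_inv_eq_right_inv left_inv right_inv)) a

section ChangeOfHopfAlgebra

variable {k : Type u} [Field k] {H H' : Type u} [Ring H] [HopfAlgebra k H] [Ring H']
  [HopfAlgebra k H']

section Naturality

variable (φ : H' →ₐc[k] H) {X Y : Type u} [AddCommGroup X] [Module k X]
  [AddCommGroup Y] [Module k Y] (f : X →ₗ[k] Y)

theorem counitLast_comp_map :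
    counitLast k H Y ∘ₗ map f φ.toLinearMap = f ∘ₗ counitLast k H' X := by
  ext x a
  simp [counitLast]

theorem antLast_comp_map :
    antLast k H Y ∘ₗ map f φ.toLinearMap = map f φ.toLinearMap ∘ₗ antLast k H' X := by
  ext x a
  simp [antLast, BialgHom.toCoalgHom_apply, BialgHom.map_antipode]

theorem mulLast_comp_map :
    mulLast k H Y ∘ₗ map (map f φ.toLinearMap) φ.toLinearMap
      = map f φ.toLinearMap ∘ₗ mulLast k H' X := by
  ext x a b
  simp [mulLast, BialgHom.toCoalgHom_apply]

theorem comulLast_comp_map :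
    comulLast k H Y ∘ₗ map f φ.toLinearMap
      = map (map f φ.toLinearMap) φ.toLinearMap ∘ₗ comulLast k H' X := by
  rw [comulLast, comulLast, LinearMap.comp_assoc, LinearMap.lTensor_comp_map, ← φ.map_comp_comul,
    ← LinearMap.map_comp_lTensor, ← LinearMap.comp_assoc, ← map_map_comp_assoc_symm_eq,
    LinearMap.comp_assoc]

end Naturality

variable {M : Type u} [AddCommGroup M] [Module k M]

open LinearMap in
theorem IsPartialComodule.lTensor_comp (φ : H' →ₐc[k] H) {ρ' : M →ₗ[k] M ⊗[k] H'}
    (hρ' : IsPartialComodule k H' ρ') :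
    IsPartialComodule k H (lTensor M φ.toLinearMap ∘ₗ ρ') := by
  -- `jₙ` applies `φ` to the last `n` tensor factors; every structure map commutes with them.
  set ψ := φ.toLinearMap
  set j₁ := lTensor M ψ
  set j₂ := map j₁ ψ
  set j₃ := map j₂ ψ
  have coaction : ∀ y, rTensor H (j₁ ∘ₗ ρ') (j₁ y) = j₂ (rTensor H' ρ' y) :=
    LinearMap.congr_fun (rTensor_comp_map_of_comp_eq (f := LinearMap.id) (g' := ρ') ψ rfl)
  have coaction₂ :
      ∀ y, rTensor H (rTensor H (j₁ ∘ₗ ρ')) (j₂ y) = j₃ (rTensor H' (rTensor H' ρ') y) :=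
    LinearMap.congr_fun (rTensor_comp_map_of_comp_eq ψ (ext coaction))
  have comul₁ :
      ∀ y, rTensor H (comulLast k H M) (j₂ y) = j₃ (rTensor H' (comulLast k H' M) y) :=
    LinearMap.congr_fun (rTensor_comp_map_of_comp_eq ψ (comulLast_comp_map φ LinearMap.id))
  have comul₂ : ∀ y, comulLast k H (M ⊗[k] H) (j₂ y) = j₃ (comulLast k H' (M ⊗[k] H') y) :=
    LinearMap.congr_fun (comulLast_comp_map φ j₁)
  have ant₁ : ∀ y, antLast k H ((M ⊗[k] H) ⊗[k] H) (j₃ y) = j₃ (antLast k H' _ y) :=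
    LinearMap.congr_fun (antLast_comp_map φ j₂)
  have ant₂ : ∀ y, rTensor H (antLast k H (M ⊗[k] H)) (j₃ y)
      = j₃ (rTensor H' (antLast k H' (M ⊗[k] H')) y) :=
    LinearMap.congr_fun (rTensor_comp_map_of_comp_eq ψ (antLast_comp_map φ j₁))
  have mul₁ : ∀ y, mulLast k H (M ⊗[k] H) (j₃ y) = j₂ (mulLast k H' (M ⊗[k] H') y) :=
    LinearMap.congr_fun (mulLast_comp_map φ j₁)
  have mul₂ : ∀ y, rTensor H (mulLast k H M) (j₃ y) = j₂ (rTensor H' (mulLast k H' M) y) :=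
    LinearMap.congr_fun (rTensor_comp_map_of_comp_eq ψ (mulLast_comp_map φ LinearMap.id))
  refine ⟨?_, ?_, ?_⟩ <;> ext m
  · exact (LinearMap.congr_fun (counitLast_comp_map φ LinearMap.id) (ρ' m)).trans
      (LinearMap.congr_fun hρ'.counit m)
  · simp only [LinearMap.comp_apply, coaction, comul₁, coaction₂, ant₁, mul₁]
    exact congrArg j₂ (LinearMap.congr_fun hρ'.pcm2 m)
  · simp only [LinearMap.comp_apply, coaction, comul₂, coaction₂, ant₂, mul₂]
    exact congrArg j₂ (LinearMap.congr_fun hρ'.pcm3 m)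

theorem IsSubcomodule.of_lTensor_comp {ψ : H' →ₗ[k] H} (hψ : Function.Injective ψ)
    {ρ' : M →ₗ[k] M ⊗[k] H'} {N : Submodule k M}
    (hN : IsSubcomodule k H (LinearMap.lTensor M ψ ∘ₗ ρ') N) : IsSubcomodule k H' ρ' N :=
  fun n hn => (lTensor_mem_range_rTensor_subtype_iff N hψ (ρ' n)).mp (hN n hn)

theorem IsRegularComodule.of_isSubcomodule_imp {ρ : M →ₗ[k] M ⊗[k] H}
    {ρ' : M →ₗ[k] M ⊗[k] H'} (h : ∀ N, IsSubcomodule k H ρ N → IsSubcomodule k H' ρ' N)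
    (hρ : IsRegularComodule k H ρ) : IsRegularComodule k H' ρ' :=
  top_unique <| hρ.ge.trans <| sSup_le_sSup fun N hN => ⟨h N hN.1, hN.2⟩

end ChangeOfHopfAlgebra

theorem hopfSubalgebra_regular_general
    (k : Type u) [Field k] (H : Type u) [Ring H] [HopfAlgebra k H]
    (H' : Type u) [Ring H'] [HopfAlgebra k H']
    (ι : H' →ₐc[k] H) (hinj : Function.Injective ι)
    (hreg : IsRegularHopf k H) :
    IsRegularHopf k H' := by
  intro M _ _ ρ' hρ'
  exact (hreg M _ _ _ (hρ'.lTensor_comp ι)).of_isSubcomodule_imp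
    fun N hN => hN.of_lTensor_comp (ψ := ι.toLinearMap) hinj

/-- If `H` is a regular Hopf algebra, then every Hopf subalgebra of `H`
(here presented as a Hopf algebra `H'` together with an injective morphism of Hopf algebras
`ι : H' → H`) is regular as well. -/
theorem hopfSubalgebra_regular
    (k : Type u) [Field k] (H : Type u) [Ring H] [HopfAlgebra k H]
    (H' : Type u) [Ring H'] [HopfAlgebra k H']
    (ι : H' →ₐc[k] H) (hinj : Function.Injective ι)
    (hS : ∀ a : H', ι (HopfAlgebra.antipode (R := k) a) =
      HopfAlgebra.antipode (R := k) (ι a))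
    (hreg : IsRegularHopf k H) :
    IsRegularHopf k H' :=
  hopfSubalgebra_regular_general k H H' ι hinj hreg

end
end

section
/- Let H be a Hopf algebra over a field k, M a k-vector space and ρ : M → M ⊗ H an arbitrary linear map. Let N be the set of all m ∈ M satisfying, for all n ≥ 1: (A1) (M ⊗ ε ⊗ H^{⊗(n−1)}) ρⁿ(m) = ρ^{n−1}(m); (A2) (M ⊗ H ⊗ μ ⊗ H^{⊗(n−1)})(M ⊗ H ⊗ H ⊗ S ⊗ H^{⊗(n−1)})(M ⊗ Δ ⊗ H^{⊗n}) ρ^{n+1}(m) = (M ⊗ H ⊗ μ ⊗ H^{⊗(n−1)})(M ⊗ H ⊗ H ⊗ S ⊗ H^{⊗(n−1)}) ρ^{n+2}(m); (A3) (M ⊗ μ ⊗ H^{⊗n})(M ⊗ H ⊗ S ⊗ H^{⊗n})(M ⊗ H ⊗ Δ ⊗ H^{⊗(n−1)}) ρ^{n+1}(m) = (M ⊗ μ ⊗ H^{⊗n})(M ⊗ H ⊗ S ⊗ H^{⊗n}) ρ^{n+2}(m). Then N is the largest subspace of M (with respect to inclusion) such that ρ(N) ⊆ N ⊗ H and (N,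 ρ|_N) is a partial H-comodule; moreover it contains every subspace N' ⊆ M with ρ(N') ⊆ N' ⊗ H for which (N', ρ|_{N'}) is a partial H-comodule. -/
/-!
Condition `(Ai)` at level `n + 1`, evaluated at `m`, is condition `(Ai)` at level `n` tensored with
`H` and evaluated at `ρ m`, while at level `1` it is `(PCMi)` evaluated at `m`. By induction every
element of a partial comodule satisfies all the conditions; and expanding `ρ m` in a basis of `H`,
the coefficients of `ρ m` satisfy them whenever `m` does, so `N` is `ρ`-invariant. The conditions
are natural in the comodule, so along the inclusion of a `ρ`-invariant subspace `N'` they hold in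
`N'` exactly when they hold in `M`. Applied to `N` this gives the axioms `(PCMi)` on `N`, and
applied to a partial subcomodule `N'` it gives `N' ≤ N`.
-/

open TensorProduct CategoryTheory CategoryTheory.Limits

noncomputable section

universe u

section TPow

variable (k : Type u) [Field k] (H : Type u) [Ring H] [HopfAlgebra k H]
variable (M : Type u) [AddCommGroup M] [Module k M]


/-- The iterated tensor product `M ⊗ H^{⊗n}` (with all tensor factors associated to the
left), as a bundled `k`-module. -/
def TPow : ℕ → ModuleCat.{u} k
  | 0 => ModuleCat.of k M
  | n + 1 => ModuleCat.of k (TPow n ⊗[k] H)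

variable {M}

/-- `ρ ⊗ H^{⊗n} : M ⊗ H^{⊗n} → M ⊗ H^{⊗(n+1)}`. -/
def deepCoact (ρ : M →ₗ[k] M ⊗[k] H) : ∀ n : ℕ, TPow k H M n →ₗ[k] TPow k H M (n + 1)
  | 0 => ρ
  | n + 1 => LinearMap.rTensor H (deepCoact ρ n)

/-- The iterate `ρⁿ = (ρ ⊗ H^{⊗(n-1)}) ∘ ρ^{n-1} : M → M ⊗ H^{⊗n}`, with `ρ⁰ = id`. -/
def coactPow (ρ : M →ₗ[k] M ⊗[k] H) : ∀ n : ℕ, M →ₗ[k] TPow k H M n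
  | 0 => LinearMap.id
  | n + 1 => deepCoact k H ρ n ∘ₗ coactPow ρ n

/-- `M ⊗ ε ⊗ H^{⊗m} : M ⊗ H^{⊗(1+m)} → M ⊗ H^{⊗m}`. -/
def opCounit : ∀ m : ℕ, TPow k H M (1 + m) →ₗ[k] TPow k H M (0 + m)
  | 0 => counitLast k H M
  | m + 1 => LinearMap.rTensor H (opCounit m)

/-- `(M ⊗ H ⊗ μ)(M ⊗ H ⊗ H ⊗ S)(M ⊗ Δ ⊗ H) ⊗ H^{⊗m}` on `M ⊗ H^{⊗(2+m)}`. -/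
def opA2L : ∀ m : ℕ, TPow k H M (2 + m) →ₗ[k] TPow k H M (2 + m)
  | 0 => mulLast k H (M ⊗[k] H) ∘ₗ antLast k H ((M ⊗[k] H) ⊗[k] H) ∘ₗ
      LinearMap.rTensor H (comulLast k H M)
  | m + 1 => LinearMap.rTensor H (opA2L m)

/-- `(M ⊗ H ⊗ μ)(M ⊗ H ⊗ H ⊗ S) ⊗ H^{⊗m}` on `M ⊗ H^{⊗(3+m)}`. -/
def opA2R : ∀ m : ℕ, TPow k H M (3 + m) →ₗ[k] TPow k H M (2 + m)
  | 0 => mulLast k H (M ⊗[k] H) ∘ₗ antLast k H ((M ⊗[k] H) ⊗[k] H)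
  | m + 1 => LinearMap.rTensor H (opA2R m)

/-- `(M ⊗ μ ⊗ H)(M ⊗ H ⊗ S ⊗ H)(M ⊗ H ⊗ Δ) ⊗ H^{⊗m}` on `M ⊗ H^{⊗(2+m)}`. -/
def opA3L : ∀ m : ℕ, TPow k H M (2 + m) →ₗ[k] TPow k H M (2 + m)
  | 0 => LinearMap.rTensor H (mulLast k H M) ∘ₗ
      LinearMap.rTensor H (antLast k H (M ⊗[k] H)) ∘ₗ comulLast k H (M ⊗[k] H)
  | m + 1 => LinearMap.rTensor H (opA3L m)

/-- `(M ⊗ μ ⊗ H)(M ⊗ H ⊗ S ⊗ H) ⊗ H^{⊗m}` on `M ⊗ H^{⊗(3+m)}`. -/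
def opA3R : ∀ m : ℕ, TPow k H M (3 + m) →ₗ[k] TPow k H M (2 + m)
  | 0 => LinearMap.rTensor H (mulLast k H M) ∘ₗ
      LinearMap.rTensor H (antLast k H (M ⊗[k] H))
  | m + 1 => LinearMap.rTensor H (opA3R m)


end TPow

section TensorBasis

variable {R : Type*} [CommSemiring R] {M N P : Type*} [AddCommMonoid M] [Module R M]
  [AddCommMonoid N] [Module R N] [AddCommMonoid P] [Module R P]

theorem LinearMap.rTensor_apply_comm {Q S : Type*} [AddCommMonoid Q] [Module R Q]
    [AddCommMonoid S] [Module R S] {f : M →ₗ[R] P} {g : P →ₗ[R] S} {f' : Q →ₗ[R] S}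
    {g' : M →ₗ[R] Q} (h : ∀ x, g (f x) = f' (g' x)) (t : M ⊗[R] N) :
    rTensor N g (rTensor N f t) = rTensor N f' (rTensor N g' t) := by
  have hc : g ∘ₗ f = f' ∘ₗ g' := LinearMap.ext h
  rw [← rTensor_comp_apply, ← rTensor_comp_apply, hc]

variable {ι : Type*} [DecidableEq ι] (b : Module.Basis ι R N)

theorem TensorProduct.equivFinsuppOfBasisRight_rTensor (g : M →ₗ[R] P) (t : M ⊗[R] N) (i : ι) :
    equivFinsuppOfBasisRight b (LinearMap.rTensor N g t) i =
      g (equivFinsuppOfBasisRight b t i) := by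
  induction t using TensorProduct.induction_on <;> simp_all

theorem TensorProduct.apply_equivFinsuppOfBasisRight_eq {g g' : M →ₗ[R] P} {t : M ⊗[R] N}
    (h : LinearMap.rTensor N g t = LinearMap.rTensor N g' t) (i : ι) :
    g (equivFinsuppOfBasisRight b t i) = g' (equivFinsuppOfBasisRight b t i) := by
  rw [← equivFinsuppOfBasisRight_rTensor, h, equivFinsuppOfBasisRight_rTensor]

theorem TensorProduct.mem_range_rTensor_subtype {p : Submodule R M} {t : M ⊗[R] N}
    (h : ∀ i, equivFinsuppOfBasisRight b t i ∈ p) :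
    t ∈ LinearMap.range (LinearMap.rTensor N p.subtype) := by
  rw [← (equivFinsuppOfBasisRight b).symm_apply_apply t, equivFinsuppOfBasisRight_symm_apply]
  exact Submodule.finsuppSum_mem _ _ _ _ fun i _ => ⟨⟨_, h i⟩ ⊗ₜ b i, rfl⟩

end TensorBasis

section Naturality

variable {k : Type u} [Field k] {H : Type u} [Ring H] [HopfAlgebra k H]
variable {X Y : Type u} [AddCommGroup X] [Module k X] [AddCommGroup Y] [Module k Y]

lemma counitLast_rTensor (f : X →ₗ[k] Y) (t : X ⊗[k] H) :
    counitLast k H Y (LinearMap.rTensor H f t) = f (counitLast k H X t) := by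
  induction t using TensorProduct.induction_on <;> simp_all [counitLast]

lemma antLast_rTensor (f : X →ₗ[k] Y) (t : X ⊗[k] H) :
    antLast k H Y (LinearMap.rTensor H f t) = LinearMap.rTensor H f (antLast k H X t) := by
  induction t using TensorProduct.induction_on <;> simp_all [antLast]

lemma mulLast_rTensor (f : X →ₗ[k] Y) (t : (X ⊗[k] H) ⊗[k] H) :
    mulLast k H Y (LinearMap.rTensor H (LinearMap.rTensor H f) t) =
      LinearMap.rTensor H f (mulLast k H X t) := by
  induction t using TensorProduct.induction_on with
  | tmul x h =>
    induction x using TensorProduct.induction_on <;> simp_all [mulLast, TensorProduct.add_tmul]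
  | _ => simp_all

lemma comulLast_rTensor (f : X →ₗ[k] Y) (t : X ⊗[k] H) :
    comulLast k H Y (LinearMap.rTensor H f t) =
      LinearMap.rTensor H (LinearMap.rTensor H f) (comulLast k H X t) := by
  induction t using TensorProduct.induction_on <;>
    simp_all [comulLast, LinearMap.rTensor, TensorProduct.map_map_assoc_symm]

variable (k H) in
def tpowMap (f : X →ₗ[k] Y) : ∀ n : ℕ, TPow k H X n →ₗ[k] TPow k H Y n
  | 0 => f
  | n + 1 => LinearMap.rTensor H (tpowMap f n)

lemma tpowMap_injective {f : X →ₗ[k] Y} (hf : Function.Injective f) :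
    ∀ n, Function.Injective (tpowMap k H f n)
  | 0 => hf
  | n + 1 => Module.Flat.rTensor_preserves_injective_linearMap _ (tpowMap_injective hf n)

lemma opCounit_tpowMap (f : X →ₗ[k] Y) (m : ℕ) (t : TPow k H X (1 + m)) :
    opCounit k H m (tpowMap k H f (1 + m) t) = tpowMap k H f (0 + m) (opCounit k H m t) := by
  induction m with
  | zero => exact counitLast_rTensor f t
  | succ m ih => exact LinearMap.rTensor_apply_comm ih t

lemma opA2R_tpowMap (f : X →ₗ[k] Y) (m : ℕ) (t : TPow k H X (3 + m)) :
    opA2R k H m (tpowMap k H f (3 + m) t) = tpowMap k H f (2 + m) (opA2R k H m t) := by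
  induction m with
  | zero =>
    exact (congrArg (mulLast k H (Y ⊗[k] H)) (antLast_rTensor _ t)).trans
      (mulLast_rTensor _ _)
  | succ m ih => exact LinearMap.rTensor_apply_comm ih t

lemma opA2L_tpowMap (f : X →ₗ[k] Y) (m : ℕ) (t : TPow k H X (2 + m)) :
    opA2L k H m (tpowMap k H f (2 + m) t) = tpowMap k H f (2 + m) (opA2L k H m t) := by
  induction m with
  | zero =>
    exact (congrArg (opA2R k H 0) (LinearMap.rTensor_apply_comm (comulLast_rTensor f) t)).trans
      (opA2R_tpowMap f 0 _)
  | succ m ih => exact LinearMap.rTensor_apply_comm ih t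

lemma opA3R_tpowMap (f : X →ₗ[k] Y) (m : ℕ) (t : TPow k H X (3 + m)) :
    opA3R k H m (tpowMap k H f (3 + m) t) = tpowMap k H f (2 + m) (opA3R k H m t) := by
  induction m with
  | zero =>
    exact (congrArg (LinearMap.rTensor H (mulLast k H Y))
      (LinearMap.rTensor_apply_comm (antLast_rTensor _) t)).trans
      (LinearMap.rTensor_apply_comm (mulLast_rTensor f) _)
  | succ m ih => exact LinearMap.rTensor_apply_comm ih t

lemma opA3L_tpowMap (f : X →ₗ[k] Y) (m : ℕ) (t : TPow k H X (2 + m)) :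
    opA3L k H m (tpowMap k H f (2 + m) t) = tpowMap k H f (2 + m) (opA3L k H m t) := by
  induction m with
  | zero =>
    exact (congrArg (opA3R k H 0) (comulLast_rTensor _ t)).trans (opA3R_tpowMap f 0 _)
  | succ m ih => exact LinearMap.rTensor_apply_comm ih t

end Naturality

section Iterates

variable {k : Type u} [Field k] {H : Type u} [Ring H] [HopfAlgebra k H]
variable {X Y : Type u} [AddCommGroup X] [Module k X] [AddCommGroup Y] [Module k Y]

lemma coactPow_succ_apply (ρ : X →ₗ[k] X ⊗[k] H) (n : ℕ) (x : X) :
    coactPow k H ρ (n + 1) x = LinearMap.rTensor H (coactPow k H ρ n) (ρ x) := by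
  induction n with
  | zero => exact (LinearMap.rTensor_id_apply _ _ _).symm
  | succ n ih =>
    exact (congrArg (deepCoact k H ρ (n + 1)) ih).trans (LinearMap.rTensor_comp_apply _ _ _ _).symm

lemma rTensor_coactPow_succ_apply (ρ : X →ₗ[k] X ⊗[k] H) {n : ℕ} {P : Type*}
    [AddCommGroup P] [Module k P] (g : TPow k H X n →ₗ[k] P) (x : X) :
    LinearMap.rTensor H g (coactPow k H ρ (n + 1) x) =
      LinearMap.rTensor H (g ∘ₗ coactPow k H ρ n) (ρ x) := by
  rw [coactPow_succ_apply, LinearMap.rTensor_comp_apply]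

lemma rTensor_coactPow_succ_congr (ρ : X →ₗ[k] X ⊗[k] H) {n n' : ℕ} {P : Type*}
    [AddCommGroup P] [Module k P] (g : TPow k H X n →ₗ[k] P) (g' : TPow k H X n' →ₗ[k] P)
    (h : ∀ x, g (coactPow k H ρ n x) = g' (coactPow k H ρ n' x)) (x : X) :
    LinearMap.rTensor H g (coactPow k H ρ (n + 1) x) =
      LinearMap.rTensor H g' (coactPow k H ρ (n' + 1) x) := by
  have hc : g ∘ₗ coactPow k H ρ n = g' ∘ₗ coactPow k H ρ n' := LinearMap.ext h
  rw [rTensor_coactPow_succ_apply, rTensor_coactPow_succ_apply, hc]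

lemma tpowMap_coactPow {ρX : X →ₗ[k] X ⊗[k] H} {ρY : Y →ₗ[k] Y ⊗[k] H} {f : X →ₗ[k] Y}
    (hf : LinearMap.rTensor H f ∘ₗ ρX = ρY ∘ₗ f) (n : ℕ) (x : X) :
    tpowMap k H f n (coactPow k H ρX n x) = coactPow k H ρY n (f x) := by
  induction n generalizing x with
  | zero => rfl
  | succ n ih =>
    rw [coactPow_succ_apply, coactPow_succ_apply, ← LinearMap.comp_apply ρY, ← hf]
    exact LinearMap.rTensor_apply_comm ih _

end Iterates

section Largest

variable (k : Type u) [Field k] (H : Type u) [Ring H] [HopfAlgebra k H]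
variable {M : Type u} [AddCommGroup M] [Module k M]

/-- The element `mm ∈ M` satisfies conditions (A1), (A2) and (A3) for all `n = m + 1 ≥ 1`. -/
def SatisfiesA (ρ : M →ₗ[k] M ⊗[k] H) (mm : M) : Prop :=
  (∀ m : ℕ, opCounit k H m (coactPow k H ρ (1 + m) mm) = coactPow k H ρ (0 + m) mm) ∧
  (∀ m : ℕ, opA2L k H m (coactPow k H ρ (2 + m) mm) =
    opA2R k H m (coactPow k H ρ (3 + m) mm)) ∧
  (∀ m : ℕ, opA3L k H m (coactPow k H ρ (2 + m) mm) =
    opA3R k H m (coactPow k H ρ (3 + m) mm))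

variable {k H} {X Y : Type u} [AddCommGroup X] [Module k X] [AddCommGroup Y] [Module k Y]

theorem satisfiesA_map_iff {ρX : X →ₗ[k] X ⊗[k] H} {ρY : Y →ₗ[k] Y ⊗[k] H} {f : X →ₗ[k] Y}
    (hf : LinearMap.rTensor H f ∘ₗ ρX = ρY ∘ₗ f) (hinj : Function.Injective f) (x : X) :
    SatisfiesA k H ρY (f x) ↔ SatisfiesA k H ρX x := by
  simp only [SatisfiesA, ← tpowMap_coactPow hf, opCounit_tpowMap, opA2L_tpowMap, opA2R_tpowMap,
    opA3L_tpowMap, opA3R_tpowMap, (tpowMap_injective hinj _).eq_iff]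

theorem IsPartialComodule.satisfiesA {ρ : X →ₗ[k] X ⊗[k] H} (h : IsPartialComodule k H ρ)
    (x : X) : SatisfiesA k H ρ x := by
  refine ⟨fun m => ?_, fun m => ?_, fun m => ?_⟩
  · induction m generalizing x with
    | zero => exact LinearMap.congr_fun h.counit x
    | succ m ih =>
      exact (rTensor_coactPow_succ_congr ρ _ LinearMap.id ih x).trans
        (LinearMap.rTensor_id_apply _ _ _)
  · induction m generalizing x with
    | zero => exact LinearMap.congr_fun h.pcm2 x
    | succ m ih => exact rTensor_coactPow_succ_congr ρ _ _ ih x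
  · induction m generalizing x with
    | zero => exact LinearMap.congr_fun h.pcm3 x
    | succ m ih => exact rTensor_coactPow_succ_congr ρ _ _ ih x

theorem isPartialComodule_iff_forall_satisfiesA {ρ : X →ₗ[k] X ⊗[k] H} :
    IsPartialComodule k H ρ ↔ ∀ x, SatisfiesA k H ρ x :=
  ⟨IsPartialComodule.satisfiesA, fun h => ⟨LinearMap.ext fun x => (h x).1 0,
    LinearMap.ext fun x => (h x).2.1 0, LinearMap.ext fun x => (h x).2.2 0⟩⟩

theorem SatisfiesA.coeff_coact {ρ : M →ₗ[k] M ⊗[k] H} {x : M} (hx : SatisfiesA k H ρ x)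
    {ι : Type*} [DecidableEq ι] (b : Module.Basis ι k H) (i : ι) :
    SatisfiesA k H ρ (equivFinsuppOfBasisRight b (ρ x) i) := by
  refine ⟨fun m => ?_, fun m => ?_, fun m => ?_⟩
  · refine apply_equivFinsuppOfBasisRight_eq b (g := opCounit k H m ∘ₗ coactPow k H ρ (1 + m)) ?_ i
    rw [← rTensor_coactPow_succ_apply, ← coactPow_succ_apply]
    exact hx.1 (m + 1)
  · refine apply_equivFinsuppOfBasisRight_eq b (g := opA2L k H m ∘ₗ coactPow k H ρ (2 + m))
      (g' := opA2R k H m ∘ₗ coactPow k H ρ (3 + m)) ?_ i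
    rw [← rTensor_coactPow_succ_apply, ← rTensor_coactPow_succ_apply]
    exact hx.2.1 (m + 1)
  · refine apply_equivFinsuppOfBasisRight_eq b (g := opA3L k H m ∘ₗ coactPow k H ρ (2 + m))
      (g' := opA3R k H m ∘ₗ coactPow k H ρ (3 + m)) ?_ i
    rw [← rTensor_coactPow_succ_apply, ← rTensor_coactPow_succ_apply]
    exact hx.2.2 (m + 1)

variable (k H) in
def satisfiesASubmodule (ρ : M →ₗ[k] M ⊗[k] H) : Submodule k M :=
  (⨅ m, LinearMap.eqLocus (opCounit k H m ∘ₗ coactPow k H ρ (1 + m)) (coactPow k H ρ (0 + m))) ⊓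
  (⨅ m, LinearMap.eqLocus (opA2L k H m ∘ₗ coactPow k H ρ (2 + m))
    (opA2R k H m ∘ₗ coactPow k H ρ (3 + m))) ⊓
  (⨅ m, LinearMap.eqLocus (opA3L k H m ∘ₗ coactPow k H ρ (2 + m))
    (opA3R k H m ∘ₗ coactPow k H ρ (3 + m)))

theorem mem_satisfiesASubmodule {ρ : M →ₗ[k] M ⊗[k] H} {x : M} :
    x ∈ satisfiesASubmodule k H ρ ↔ SatisfiesA k H ρ x := by
  simp [satisfiesASubmodule, SatisfiesA, Submodule.mem_iInf, and_assoc]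

theorem isSubcomodule_satisfiesASubmodule (ρ : M →ₗ[k] M ⊗[k] H) :
    IsSubcomodule k H ρ (satisfiesASubmodule k H ρ) := fun _ hx =>
  haveI := Classical.decEq (Module.Basis.ofVectorSpaceIndex k H)
  mem_range_rTensor_subtype (Module.Basis.ofVectorSpace k H) fun i =>
    mem_satisfiesASubmodule.2 ((mem_satisfiesASubmodule.1 hx).coeff_coact _ i)

theorem IsSubcomodule.exists_restrict {ρ : M →ₗ[k] M ⊗[k] H} {N : Submodule k M}
    (hN : IsSubcomodule k H ρ N) :
    ∃ ρN : N →ₗ[k] N ⊗[k] H, LinearMap.rTensor H N.subtype ∘ₗ ρN = ρ ∘ₗ N.subtype := by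
  have hinj : Function.Injective (LinearMap.rTensor H N.subtype) :=
    Module.Flat.rTensor_preserves_injective_linearMap _ N.injective_subtype
  refine ⟨(LinearEquiv.ofInjective _ hinj).symm.toLinearMap ∘ₗ
      (ρ ∘ₗ N.subtype).codRestrict _ fun x => hN x x.2, ?_⟩
  ext x
  exact LinearEquiv.ofInjective_symm_apply (h := hinj) _ ⟨ρ x, hN x x.2⟩

/-- For an arbitrary linear map `ρ : M → M ⊗ H`, the set `N` of elements
satisfying (A1), (A2), (A3) for all `n ≥ 1` is the largest subspace of `M` which is invariant
under `ρ` and on which `ρ` restricts to a partial `H`-comodule structure; in particular it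
contains every such subspace. -/
theorem largest_partial_subcomodule (ρ : M →ₗ[k] M ⊗[k] H) :
    ∃ N : Submodule k M,
      (↑N = { mm : M | SatisfiesA k H ρ mm }) ∧
      IsSubcomodule k H ρ N ∧
      (∃ ρN : N →ₗ[k] N ⊗[k] H,
        LinearMap.rTensor H N.subtype ∘ₗ ρN = ρ ∘ₗ N.subtype ∧
        IsPartialComodule k H ρN) ∧
      (∀ N' : Submodule k M, IsSubcomodule k H ρ N' →
        (∃ ρN' : N' →ₗ[k] N' ⊗[k] H,
          LinearMap.rTensor H N'.subtype ∘ₗ ρN' = ρ ∘ₗ N'.subtype ∧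
          IsPartialComodule k H ρN') →
        N' ≤ N) := by
  set N := satisfiesASubmodule k H ρ
  have hN : IsSubcomodule k H ρ N := isSubcomodule_satisfiesASubmodule ρ
  obtain ⟨ρN, hρN⟩ := hN.exists_restrict
  refine ⟨N, Set.ext fun _ => mem_satisfiesASubmodule, hN, ⟨ρN, hρN, ?_⟩, ?_⟩
  · exact isPartialComodule_iff_forall_satisfiesA.2 fun x =>
      (satisfiesA_map_iff hρN N.injective_subtype x).1 (mem_satisfiesASubmodule.1 x.2)
  · rintro N' - ⟨ρN', hρN', hN'⟩ x hx
    exact mem_satisfiesASubmodule.2 ((satisfiesA_map_iff hρN' N'.injective_subtype ⟨x, hx⟩).2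
      (isPartialComodule_iff_forall_satisfiesA.1 hN' _))

end Largest

end
end
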